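/- arXiv:2605.27617 — 4 statements merged into one kernel-verified Lean document; each statement's English description precedes it below -/
import Mathlib

section
/- Disjoint combination, conjunction part: let V be a finite type, V₁ and V₂ disjoint finsets of V, and for i = 1, 2 let f_i be a monotone predicate on subsets of V_i (S ⊆ S' implies f_i S → f_i S') with f_i V_i true, and let h_i ∈ FreeGroup V be supported in V_i and satisfy kill_S h_i = 1 ↔ f_i (S ∩ V_i) for every S : Finset V. Then the product h₁ · h₂ satisfies kill_S (h₁ · h₂) = 1 ↔ (f₁ (S ∩ V₁) ∧ f₂ (S ∩ V₂)) for every S : Finset V. -/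
/-- The removal homomorphism: kills the generators with index in `S`. -/
def kill {V : Type*} [DecidableEq V] (S : Finset V) : FreeGroup V →* FreeGroup V :=
  FreeGroup.lift fun i => if i ∈ S then 1 else FreeGroup.of i

/-- `h` is supported in the finset `L`: it lies in the subgroup generated by the
generators indexed by `L`. -/
def SupportedIn {V : Type*} (h : FreeGroup V) (L : Finset V) : Prop :=
  h ∈ Subgroup.closure (FreeGroup.of '' (L : Set V))

lemma kill_supported_disjoint {V : Type*} [DecidableEq V] {h : FreeGroup V}
    {L T : Finset V} (hs : SupportedIn h L) (hd : Disjoint L T) :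
    kill T h = h := by
  refine Subgroup.closure_induction (fun x hx => ?_) (by simp) (fun a b _ _ ha hb => by
    simp [map_mul, ha, hb]) (fun a _ ha => by simp [map_inv, ha]) hs
  obtain ⟨i, hi, rfl⟩ := hx
  have : i ∉ T := fun hT => (Finset.disjoint_left.mp hd hi) hT
  simp [kill, this]

lemma kill_of_supported {V : Type*} [DecidableEq V] {h : FreeGroup V}
    {T : Finset V} (hs : SupportedIn h T) :
    kill T h = 1 := by
  refine Subgroup.closure_induction (fun x hx => ?_) (by simp) (fun a b _ _ ha hb => by
    simp [map_mul, ha, hb]) (fun a _ ha => by simp [map_inv, ha]) hs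
  obtain ⟨i, hi, rfl⟩ := hx
  simp [kill, Finset.mem_coe.mp hi]

lemma kill_mem_supported {V : Type*} [DecidableEq V] {h : FreeGroup V}
    {L : Finset V} (S : Finset V) (hs : SupportedIn h L) :
    SupportedIn (kill S h) L := by
  show kill S h ∈ Subgroup.closure (FreeGroup.of '' (L : Set V))
  refine Subgroup.closure_induction (fun x hx => ?_) (one_mem _) (fun a b _ _ ha hb => by
    rw [map_mul]; exact mul_mem ha hb) (fun a _ ha => by rw [map_inv]; exact inv_mem ha) hs
  obtain ⟨i, hi, rfl⟩ := hx
  by_cases hiS : i ∈ S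
  · have : kill S (FreeGroup.of i) = 1 := by simp [kill, hiS]
    rw [this]; exact one_mem _
  · have : kill S (FreeGroup.of i) = FreeGroup.of i := by simp [kill, hiS]
    rw [this]; exact Subgroup.subset_closure ⟨i, hi, rfl⟩

theorem disjoint_combination_conjunction {V : Type*} [Fintype V] [DecidableEq V]
    (V₁ V₂ : Finset V) (hdisj : Disjoint V₁ V₂)
    (f₁ f₂ : Finset V → Prop)
    (hmono₁ : ∀ S S' : Finset V, S ⊆ S' → f₁ S → f₁ S')
    (hmono₂ : ∀ S S' : Finset V, S ⊆ S' → f₂ S → f₂ S')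
    (hfull₁ : f₁ V₁) (hfull₂ : f₂ V₂)
    (h₁ h₂ : FreeGroup V)
    (hsupp₁ : SupportedIn h₁ V₁) (hsupp₂ : SupportedIn h₂ V₂)
    (hsol₁ : ∀ S : Finset V, kill S h₁ = 1 ↔ f₁ (S ∩ V₁))
    (hsol₂ : ∀ S : Finset V, kill S h₂ = 1 ↔ f₂ (S ∩ V₂)) :
    ∀ S : Finset V, kill S (h₁ * h₂) = 1 ↔ (f₁ (S ∩ V₁) ∧ f₂ (S ∩ V₂)) := by
  intro S
  rw [map_mul]
  constructor
  · intro h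
    have ha : SupportedIn (kill S h₁) V₁ := kill_mem_supported S hsupp₁
    have hb : SupportedIn (kill S h₂) V₂ := kill_mem_supported S hsupp₂
    have h1 : kill S h₁ = 1 := by
      have := congrArg (kill V₂) h
      rw [map_mul, map_one, kill_supported_disjoint ha hdisj,
        kill_of_supported hb, mul_one] at this
      exact this
    have h2 : kill S h₂ = 1 := by
      rw [h1, one_mul] at h
      exact h
    exact ⟨(hsol₁ S).mp h1, (hsol₂ S).mp h2⟩
  · rintro ⟨hf1, hf2⟩
    rw [(hsol₁ S).mpr hf1, (hsol₂ S).mpr hf2, one_mul]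
end

section
/- Disjoint combination, disjunction part: let V be a finite type, V₁ and V₂ disjoint finsets of V, and for i = 1, 2 let f_i be a monotone predicate on subsets of V_i (S ⊆ S' implies f_i S → f_i S') with f_i V_i true, and let h_i ∈ FreeGroup V be supported in V_i and satisfy kill_S h_i = 1 ↔ f_i (S ∩ V_i) for every S : Finset V. Then the commutator ⁅h₁, h₂⁆ satisfies kill_S ⁅h₁, h₂⁆ = 1 ↔ (f₁ (S ∩ V₁) ∨ f₂ (S ∩ V₂)) for every S : Finset V. -/
open scoped commutatorElement

/-!
Killing generators preserves the support of a word, so `kill S h₁` and `kill S h₂` are words in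
the disjoint alphabets `V₁` and `V₂`. For nontrivial reduced words `a`, `b` in disjoint alphabets
no cancellation can occur in `a b a⁻¹ b⁻¹`, so its reduced word is the plain concatenation and
`⁅a, b⁆ ≠ 1`. Hence `kill S ⁅h₁, h₂⁆ = ⁅kill S h₁, kill S h₂⁆` is trivial exactly when one of
`kill S h₁`, `kill S h₂` is.
-/

open FreeGroup

namespace SupportedIn

variable {V : Type*} {A : Finset V} {a : FreeGroup V}

theorem inv (ha : SupportedIn a A) : SupportedIn a⁻¹ A :=
  inv_mem ha

variable [DecidableEq V]

theorem fst_mem_of_mem_toWord (ha : SupportedIn a A) : ∀ p ∈ a.toWord, p.1 ∈ A := by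
  induction ha using Subgroup.closure_induction with
  | mem x hx =>
    obtain ⟨i, hi, rfl⟩ := hx
    simpa using hi
  | one => simp
  | mul x y _ _ ihx ihy =>
    intro p hp
    rcases List.mem_append.mp ((toWord_mul_sublist x y).mem hp) with h | h
    exacts [ihx p h, ihy p h]
  | inv x _ ihx =>
    intro p hp
    simp only [toWord_inv, invRev, List.mem_reverse, List.mem_map] at hp
    obtain ⟨q, hq, rfl⟩ := hp
    exact ihx q hq

theorem map_kill (S : Finset V) (ha : SupportedIn a A) :
    SupportedIn (kill S a) A := by
  have hle : Subgroup.closure (of '' (A : Set V)) ≤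
      (Subgroup.closure (of '' (A : Set V))).comap (kill S) := by
    rw [Subgroup.closure_le]
    rintro _ ⟨i, hi, rfl⟩
    simp only [SetLike.mem_coe, Subgroup.mem_comap, kill, lift_apply_of]
    split_ifs
    · exact one_mem _
    · exact Subgroup.subset_closure ⟨i, hi, rfl⟩
  exact hle ha

end SupportedIn

section DisjointSupports

variable {V : Type*} [DecidableEq V] {A B : Finset V} {a b : FreeGroup V}

theorem isReduced_toWord_append_of_disjoint (hAB : Disjoint A B) (ha : SupportedIn a A)
    (hb : SupportedIn b B) : IsReduced (a.toWord ++ b.toWord) :=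
  List.IsChain.append isReduced_toWord isReduced_toWord fun x hx y hy hxy =>
    absurd (hxy ▸ hb.fst_mem_of_mem_toWord y (List.mem_of_mem_head? hy))
      (Finset.disjoint_left.mp hAB (ha.fst_mem_of_mem_toWord x (List.mem_of_getLast? hx)))

theorem toWord_commutatorElement_of_disjoint (hAB : Disjoint A B) (ha : SupportedIn a A)
    (hb : SupportedIn b B) (ha₁ : a ≠ 1) (hb₁ : b ≠ 1) :
    ⁅a, b⁆.toWord = a.toWord ++ b.toWord ++ a⁻¹.toWord ++ b⁻¹.toWord := by
  have hred : IsReduced (a.toWord ++ b.toWord ++ a⁻¹.toWord ++ b⁻¹.toWord) :=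
    ((isReduced_toWord_append_of_disjoint hAB ha hb).append_overlap
      (isReduced_toWord_append_of_disjoint hAB.symm hb ha.inv) (toWord_eq_nil_iff.not.mpr hb₁)).append_overlap
      (isReduced_toWord_append_of_disjoint hAB ha.inv hb.inv) (toWord_eq_nil_iff.not.mpr (inv_ne_one.mpr ha₁))
  rw [← hred.reduce_eq, ← toWord_mk, ← mul_mk, ← mul_mk, ← mul_mk, mk_toWord, mk_toWord,
    mk_toWord, mk_toWord, commutatorElement_def]

theorem commutatorElement_eq_one_iff_of_disjoint (hAB : Disjoint A B) (ha : SupportedIn a A)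
    (hb : SupportedIn b B) : ⁅a, b⁆ = 1 ↔ a = 1 ∨ b = 1 := by
  refine ⟨fun h => ?_, ?_⟩
  · by_contra! hne
    have hword := toWord_commutatorElement_of_disjoint hAB ha hb hne.1 hne.2
    rw [h, toWord_one, eq_comm, List.append_eq_nil_iff, List.append_eq_nil_iff,
      List.append_eq_nil_iff, toWord_eq_nil_iff] at hword
    exact hne.1 hword.1.1.1
  · rintro (rfl | rfl) <;> simp

end DisjointSupports

theorem disjoint_combination_disjunction_general {V : Type*} [DecidableEq V]
    (V₁ V₂ : Finset V) (hdisj : Disjoint V₁ V₂)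
    (f₁ f₂ : Finset V → Prop)
    (h₁ h₂ : FreeGroup V)
    (hsupp₁ : SupportedIn h₁ V₁) (hsupp₂ : SupportedIn h₂ V₂)
    (hsol₁ : ∀ S : Finset V, kill S h₁ = 1 ↔ f₁ (S ∩ V₁))
    (hsol₂ : ∀ S : Finset V, kill S h₂ = 1 ↔ f₂ (S ∩ V₂)) :
    ∀ S : Finset V, kill S ⁅h₁, h₂⁆ = 1 ↔ (f₁ (S ∩ V₁) ∨ f₂ (S ∩ V₂)) := by
  intro S
  rw [map_commutatorElement, commutatorElement_eq_one_iff_of_disjoint hdisj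
    (hsupp₁.map_kill S) (hsupp₂.map_kill S), hsol₁, hsol₂]

theorem disjoint_combination_disjunction {V : Type*} [Fintype V] [DecidableEq V]
    (V₁ V₂ : Finset V) (hdisj : Disjoint V₁ V₂)
    (f₁ f₂ : Finset V → Prop)
    (hmono₁ : ∀ S S' : Finset V, S ⊆ S' → f₁ S → f₁ S')
    (hmono₂ : ∀ S S' : Finset V, S ⊆ S' → f₂ S → f₂ S')
    (hfull₁ : f₁ V₁) (hfull₂ : f₂ V₂)
    (h₁ h₂ : FreeGroup V)
    (hsupp₁ : SupportedIn h₁ V₁) (hsupp₂ : SupportedIn h₂ V₂)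
    (hsol₁ : ∀ S : Finset V, kill S h₁ = 1 ↔ f₁ (S ∩ V₁))
    (hsol₂ : ∀ S : Finset V, kill S h₂ = 1 ↔ f₂ (S ∩ V₂)) :
    ∀ S : Finset V, kill S ⁅h₁, h₂⁆ = 1 ↔ (f₁ (S ∩ V₁) ∨ f₂ (S ∩ V₂)) :=
  disjoint_combination_disjunction_general V₁ V₂ hdisj f₁ f₂ h₁ h₂ hsupp₁ hsupp₂ hsol₁ hsol₂
end

section
/- Combination lemma: let V be a finite type, g₁ and g₂ specifications on V, and h₁, h₂ ∈ FreeGroup V words solving g₁ and g₂ respectively. Suppose that for every S : Finset V at which both ¬g₁ S and ¬g₂ S hold, the specifications g₁ and g₂ separate above S. Then h₁ · h₂ solves the pointwise conjunction g₁ ∧ g₂, and the commutator ⁅h₁, h₂⁆ solves the pointwise disjunction g₁ ∨ g₂. -/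
/-- `f` is a specification on `V`: a monotone predicate on removal sets that holds
when all nails are removed. -/
def IsSpec {V : Type*} [Fintype V] (f : Finset V → Prop) : Prop :=
  (∀ S S' : Finset V, S ⊆ S' → f S → f S') ∧ f Finset.univ

/-- `h` solves the specification `f`. -/
def Solves {V : Type*} [Fintype V] [DecidableEq V] (h : FreeGroup V) (f : Finset V → Prop) : Prop :=
  ∀ S : Finset V, kill S h = 1 ↔ f S

/-- `g₁` and `g₂` separate above `S`: they disagree at some superset of `S`. -/
def SeparateAbove {V : Type*} (g₁ g₂ : Finset V → Prop) (S : Finset V) : Prop :=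
  ∃ S' : Finset V, S ⊆ S' ∧ ¬(g₁ S' ↔ g₂ S')

open scoped commutatorElement

/-!
For the product: `kill S (h₁ * h₂) = 1` makes `kill S h₁` and `kill S h₂` mutually inverse,
so they are trivial together, and this persists under every `kill S'` with `S ⊆ S'`, since
`kill S'` factors through `kill S`. If neither `g₁ S` nor `g₂ S` holds, a set `S'` above `S`
separating `g₁` and `g₂` contradicts this.

For the commutator: `⁅a, b⁆ = 1` means that `a` and `b` commute. The subgroup they generate in
a free group is free (Nielsen–Schreier) and abelian, hence cyclic, so `a` and `b` are powers of
a common element. Free groups are torsion-free, so a homomorphism into a free group kills a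
nontrivial `a` iff it kills a nontrivial `b`; again a separating `S'` gives a contradiction.
-/

namespace FreeGroup

variable {α : Type*}

theorem eq_of_commute_of {x y : α} (h : Commute (of x) (of y)) : x = y := by
  classical
  by_contra hxy
  -- `x` and `y` go to the non-commuting transpositions `(0 1)` and `(1 2)` of `Fin 3`.
  let f : α → Equiv.Perm (Fin 3) := fun z => if z = x then .swap 0 1 else .swap 1 2
  have hf : f x * f y = f y * f x := by simpa using congrArg (lift f) h.eq
  simp only [f, if_pos rfl, if_neg (Ne.symm hxy)] at hf
  exact absurd hf (by decide)

end FreeGroup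

namespace IsFreeGroup

variable {G : Type*} [Group G] [IsFreeGroup G]

instance [IsMulCommutative G] : Subsingleton (Generators G) := by
  refine ⟨fun x y => FreeGroup.eq_of_commute_of ?_⟩
  let e := toFreeGroup G
  have hc : Commute (e.symm (.of x)) (e.symm (.of y)) := mul_comm' _ _
  simpa using hc.map e

theorem isCyclic [IsMulCommutative G] : IsCyclic G := by
  have : IsCyclic (FreeGroup (Generators G)) := by
    rcases isEmpty_or_nonempty (Generators G) with hempty | hne
    · infer_instance
    · have : Unique (Generators G) := uniqueOfSubsingleton hne.some
      infer_instance
  exact isCyclic_of_surjective _ (toFreeGroup G).symm.surjective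

theorem exists_zpowers_of_commute {a b : G} (hab : Commute a b) :
    ∃ d : G, a ∈ Subgroup.zpowers d ∧ b ∈ Subgroup.zpowers d := by
  let H := Subgroup.closure {a, b}
  have : IsMulCommutative H := Subgroup.isMulCommutative_closure <| by
    rintro x (rfl | rfl) y (rfl | rfl) <;> first | rfl | exact hab.eq | exact hab.symm.eq
  have : IsCyclic H := isCyclic
  obtain ⟨d, hd⟩ := IsCyclic.exists_generator (α := H)
  have hmem (x : G) (hx : x ∈ H) : x ∈ Subgroup.zpowers (d : G) := by
    obtain ⟨n, hn⟩ := hd ⟨x, hx⟩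
    exact ⟨n, by simpa using congrArg Subtype.val hn⟩
  exact ⟨d, hmem a (Subgroup.subset_closure (by simp)),
    hmem b (Subgroup.subset_closure (by simp))⟩

theorem map_eq_one_iff_of_commute {H : Type*} [Group H] [IsMulTorsionFree H] {a b : G}
    (hab : Commute a b) (ha : a ≠ 1) (hb : b ≠ 1) (f : G →* H) : f a = 1 ↔ f b = 1 := by
  obtain ⟨d, ⟨m, rfl⟩, ⟨p, rfl⟩⟩ := exists_zpowers_of_commute hab
  have hm : m ≠ 0 := by rintro rfl; exact ha (zpow_zero d)
  have hp : p ≠ 0 := by rintro rfl; exact hb (zpow_zero d)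
  simp only [map_zpow, IsMulTorsionFree.zpow_eq_one_iff_left hm,
    IsMulTorsionFree.zpow_eq_one_iff_left hp]

end IsFreeGroup

section Removal

variable {V : Type*} [DecidableEq V]

theorem kill_comp_kill {S S' : Finset V} (hSS' : S ⊆ S') : (kill S').comp (kill S) = kill S' := by
  ext i
  by_cases hi : i ∈ S
  · simp [kill, hi, hSS' hi]
  · simp [kill, hi]

theorem kill_kill {S S' : Finset V} (hSS' : S ⊆ S') (w : FreeGroup V) :
    kill S' (kill S w) = kill S' w :=
  DFunLike.congr_fun (kill_comp_kill hSS') w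

variable [Fintype V] {g₁ g₂ : Finset V → Prop} {h₁ h₂ : FreeGroup V}

theorem SeparateAbove.exists_kill_not_iff {S : Finset V} (hsep : SeparateAbove g₁ g₂ S)
    (hs₁ : Solves h₁ g₁) (hs₂ : Solves h₂ g₂) :
    ∃ S' : Finset V, ¬(kill S' (kill S h₁) = 1 ↔ kill S' (kill S h₂) = 1) := by
  obtain ⟨S', hSS', hne⟩ := hsep
  exact ⟨S', by rwa [kill_kill hSS', kill_kill hSS', hs₁, hs₂]⟩

theorem Solves.mul (hs₁ : Solves h₁ g₁) (hs₂ : Solves h₂ g₂)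
    (hsep : ∀ S : Finset V, ¬g₁ S → ¬g₂ S → SeparateAbove g₁ g₂ S) :
    Solves (h₁ * h₂) (fun S => g₁ S ∧ g₂ S) := by
  intro S
  rw [map_mul]
  refine ⟨fun h => ?_, fun ⟨h1, h2⟩ => by rw [(hs₁ S).2 h1, (hs₂ S).2 h2, one_mul]⟩
  have hiff : g₁ S ↔ g₂ S :=
    (hs₁ S).symm.trans ((eq_one_iff_eq_one_of_mul_eq_one h).trans (hs₂ S))
  by_contra hnot
  have hn₁ : ¬g₁ S := fun h1 => hnot ⟨h1, hiff.1 h1⟩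
  obtain ⟨S', hS'⟩ := (hsep S hn₁ (mt hiff.2 hn₁)).exists_kill_not_iff hs₁ hs₂
  exact hS' (eq_one_iff_eq_one_of_mul_eq_one (by rw [← map_mul, h, map_one]))

theorem Solves.commutatorElement (hs₁ : Solves h₁ g₁) (hs₂ : Solves h₂ g₂)
    (hsep : ∀ S : Finset V, ¬g₁ S → ¬g₂ S → SeparateAbove g₁ g₂ S) :
    Solves ⁅h₁, h₂⁆ (fun S => g₁ S ∨ g₂ S) := by
  refine fun S => ⟨fun h => ?_, ?_⟩
  · rw [map_commutatorElement, commutatorElement_eq_one_iff_commute] at h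
    by_contra! hnot
    obtain ⟨S', hS'⟩ := (hsep S hnot.1 hnot.2).exists_kill_not_iff hs₁ hs₂
    exact hS' (IsFreeGroup.map_eq_one_iff_of_commute h (mt (hs₁ S).1 hnot.1)
      (mt (hs₂ S).1 hnot.2) (kill S'))
  · rintro (h1 | h2)
    · rw [map_commutatorElement, (hs₁ S).2 h1, commutatorElement_one_left]
    · rw [map_commutatorElement, (hs₂ S).2 h2, commutatorElement_one_right]

end Removal

theorem combination_lemma_general {V : Type*} [Fintype V] [DecidableEq V]
    (g₁ g₂ : Finset V → Prop)
    (h₁ h₂ : FreeGroup V) (hs₁ : Solves h₁ g₁) (hs₂ : Solves h₂ g₂)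
    (hsep : ∀ S : Finset V, ¬g₁ S → ¬g₂ S → SeparateAbove g₁ g₂ S) :
    Solves (h₁ * h₂) (fun S => g₁ S ∧ g₂ S) ∧
    Solves ⁅h₁, h₂⁆ (fun S => g₁ S ∨ g₂ S) :=
  ⟨hs₁.mul hs₂ hsep, hs₁.commutatorElement hs₂ hsep⟩

theorem combination_lemma {V : Type*} [Fintype V] [DecidableEq V]
    (g₁ g₂ : Finset V → Prop) (hg₁ : IsSpec g₁) (hg₂ : IsSpec g₂)
    (h₁ h₂ : FreeGroup V) (hs₁ : Solves h₁ g₁) (hs₂ : Solves h₂ g₂)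
    (hsep : ∀ S : Finset V, ¬g₁ S → ¬g₂ S → SeparateAbove g₁ g₂ S) :
    Solves (h₁ * h₂) (fun S => g₁ S ∧ g₂ S) ∧
    Solves ⁅h₁, h₂⁆ (fun S => g₁ S ∨ g₂ S) :=
  combination_lemma_general g₁ g₂ h₁ h₂ hs₁ hs₂ hsep
end

section
/- Commutator trees as disjunctions: let V be a finite type, T a commutator tree over words h₁, …, h_m ∈ FreeGroup V whose leaves solve specifications g₁, …, g_m on V, and let f = g₁ ∨ ⋯ ∨ g_m (pointwise disjunction, itself a specification). Then: (i) for every S : Finset V with f S, the value of T satisfies kill_S (value T) = 1; and (ii) the value of T solves f if and only if for every S : Finset V with ¬f S and every internal node (non-leaf subtree) T' of T, kill_S (value T') ≠ 1. -/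
/-- A commutator tree: a full binary tree whose leaves are labelled by words of the
free group on `V`. -/
inductive CommTree (V : Type*) : Type _ where
  | leaf : FreeGroup V → CommTree V
  | node : CommTree V → CommTree V → CommTree V

namespace CommTree

open scoped commutatorElement in
/-- The value of a commutator tree: a leaf evaluates to its label, an internal node
to the commutator of the values of its two children. -/
def value {V : Type*} : CommTree V → FreeGroup V
  | leaf h => h
  | node a b => ⁅a.value, b.value⁆

/-- The list of leaf labels, in left-to-right order. -/
def leaves {V : Type*} : CommTree V → List (FreeGroup V)
  | leaf h => [h]
  | node a b => a.leaves ++ b.leaves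

/-- The list of all internal nodes (non-leaf subtrees) of a commutator tree. -/
def internalNodes {V : Type*} : CommTree V → List (CommTree V)
  | leaf _ => []
  | node a b => node a b :: (a.internalNodes ++ b.internalNodes)

end CommTree

theorem List.Forall₂.exists_mem_iff {α β : Type*} {P : α → Prop} {Q : β → Prop}
    {l₁ : List α} {l₂ : List β} (h : List.Forall₂ (fun a b => P a ↔ Q b) l₁ l₂) :
    (∃ a ∈ l₁, P a) ↔ ∃ b ∈ l₂, Q b := by
  induction h with
  | nil => simp
  | cons hab _ ih => simpa only [List.mem_cons, exists_eq_or_imp] using or_congr hab ih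

namespace CommTree

open scoped commutatorElement

variable {V G : Type*} [Group G]

theorem map_value_node_eq_one (φ : FreeGroup V →* G) {a b : CommTree V}
    (h : φ a.value = 1 ∨ φ b.value = 1) : φ (node a b).value = 1 := by
  rcases h with h | h <;> simp [value, map_commutatorElement, h]

theorem map_value_eq_one_of_mem_leaves (φ : FreeGroup V →* G) {T : CommTree V}
    {h : FreeGroup V} (hT : h ∈ T.leaves) (hφ : φ h = 1) : φ T.value = 1 := by
  induction T with
  | leaf w =>
    rw [leaves, List.mem_singleton] at hT
    exact hT ▸ hφ
  | node a b iha ihb =>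
    rw [leaves, List.mem_append] at hT
    exact map_value_node_eq_one φ (hT.imp iha ihb)

theorem map_value_eq_one_of_mem_internalNodes (φ : FreeGroup V →* G) {T T' : CommTree V}
    (hT : T' ∈ T.internalNodes) (hφ : φ T'.value = 1) : φ T.value = 1 := by
  induction T with
  | leaf _ => simp [internalNodes] at hT
  | node a b iha ihb =>
    rw [internalNodes, List.mem_cons, List.mem_append] at hT
    rcases hT with rfl | hT
    · exact hφ
    · exact map_value_node_eq_one φ (hT.imp iha ihb)

theorem map_value_eq_one_iff (φ : FreeGroup V →* G) (T : CommTree V) :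
    φ T.value = 1 ↔
      (∃ h ∈ T.leaves, φ h = 1) ∨ ∃ T' ∈ T.internalNodes, φ T'.value = 1 := by
  refine ⟨fun hφ => ?_, ?_⟩
  · cases T with
    | leaf h => exact .inl ⟨h, List.mem_singleton_self h, hφ⟩
    | node a b => exact .inr ⟨node a b, List.mem_cons_self, hφ⟩
  · rintro (⟨h, hT, hφ⟩ | ⟨T', hT, hφ⟩)
    · exact map_value_eq_one_of_mem_leaves φ hT hφ
    · exact map_value_eq_one_of_mem_internalNodes φ hT hφ

end CommTree

theorem commutator_trees_as_disjunctions_general {V : Type*} [DecidableEq V]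
    (T : CommTree V) (gs : List (Finset V → Prop))
    (hleaves : List.Forall₂ (fun h g => ∀ S : Finset V, kill S h = 1 ↔ g S)
      T.leaves gs) :
    (∀ S : Finset V, (∃ g ∈ gs, g S) → kill S T.value = 1) ∧
    ((∀ S : Finset V, kill S T.value = 1 ↔ ∃ g ∈ gs, g S) ↔
      ∀ S : Finset V, ¬(∃ g ∈ gs, g S) →
        ∀ T' ∈ T.internalNodes, kill S T'.value ≠ 1) := by
  have hdisj (S : Finset V) : (∃ g ∈ gs, g S) ↔ ∃ h ∈ T.leaves, kill S h = 1 :=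
    (hleaves.imp fun _ _ hR => hR S).exists_mem_iff.symm
  have hvalue (S : Finset V) := CommTree.map_value_eq_one_iff (kill S) T
  simp only [hdisj, hvalue, or_iff_left_iff_imp]
  refine ⟨fun S => Or.inl, forall_congr' fun S => ?_⟩
  rw [← not_imp_not]
  simp only [not_exists, not_and, ne_eq]

theorem commutator_trees_as_disjunctions {V : Type*} [Fintype V] [DecidableEq V]
    (T : CommTree V) (gs : List (Finset V → Prop))
    (hspec : ∀ g ∈ gs, IsSpec g)
    (hleaves : List.Forall₂ (fun h g => ∀ S : Finset V, kill S h = 1 ↔ g S)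
      T.leaves gs) :
    (∀ S : Finset V, (∃ g ∈ gs, g S) → kill S T.value = 1) ∧
    ((∀ S : Finset V, kill S T.value = 1 ↔ ∃ g ∈ gs, g S) ↔
      ∀ S : Finset V, ¬(∃ g ∈ gs, g S) →
        ∀ T' ∈ T.internalNodes, kill S T'.value ≠ 1) :=
  commutator_trees_as_disjunctions_general T gs hleaves
end
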